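/- There exists a constant C0 > 0 such that for every integer m ≥ 2 the following holds: let T be the balanced binary tree with m leaves (the complete binary tree if m is a power of 2; otherwise the complete binary tree on 2^⌊log₂ m⌋ leaves with a pair of children added to each of the m − 2^⌊log₂ m⌋ leftmost leaves), whose node set V satisfies |V| = 2m − 1. Then for every subset S ⊆ V with |S| ≥ |V|/4, the average over u ∈ S of the number of nodes in the subtree of T rooted at u is at most C0·log₂ m; equivalently, (1/|S|)·Σ_{u∈S} |subtree(u)| ≤ C0·log₂ m. -/

import Mathlib

open Classical
open scoped ENNReal

set_option maxHeartbeats 1000000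

/-! ### Deterministic decision trees -/

inductive DTree (ι σ : Type) : Type
  | leaf (b : Bool) : DTree ι σ
  | node (v : ι) (child : σ → DTree ι σ) : DTree ι σ

namespace DTree

variable {ι σ : Type}

/-- The output of the decision tree on input `x`. -/
def eval (x : ι → σ) : DTree ι σ → Bool
  | leaf b => b
  | node v child => (child (x v)).eval x

/-- The list of variables queried by the decision tree on input `x`,
in the order they are queried. -/
def queryList (x : ι → σ) : DTree ι σ → List ι
  | leaf _ => []
  | node v child => v :: (child (x v)).queryList x

/-- The cost of the decision tree on input `x`: the number of internal nodes visited. -/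
def cost (T : DTree ι σ) (x : ι → σ) : ℕ := (T.queryList x).length

/-- `T` computes `f` if it outputs `f x` on every input `x`. -/
def Computes (T : DTree ι σ) (f : (ι → σ) → Bool) : Prop := ∀ x, T.eval x = f x

end DTree

/-- Deterministic query complexity. -/
noncomputable def detComplexity {ι σ : Type} (f : (ι → σ) → Bool) : ℕ :=
  sInf {d : ℕ | ∃ T : DTree ι σ, T.Computes f ∧ ∀ x, T.cost x ≤ d}

/-- Expected cost of a randomized decision tree (a distribution over deterministic
decision trees) on input `x`. -/
noncomputable def expCost {ι σ : Type} (μ : PMF (DTree ι σ)) (x : ι → σ) : ℝ≥0∞ :=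
  ∑' T : DTree ι σ, μ T * (T.cost x : ℝ≥0∞)

/-- Zero-error (Las Vegas) randomized query complexity. -/
noncomputable def R0query {ι σ : Type} (f : (ι → σ) → Bool) : ℝ≥0∞ :=
  ⨅ μ ∈ {μ : PMF (DTree ι σ) | ∀ T ∈ μ.support, T.Computes f},
    ⨆ x : ι → σ, expCost μ x

/-- One-sided error randomized query complexity. -/
noncomputable def R1query {ι σ : Type} (f : (ι → σ) → Bool) : ℝ≥0∞ :=
  ⨅ μ ∈ {μ : PMF (DTree ι σ) |
      (∀ x, f x = false → ∀ T ∈ μ.support, T.eval x = false) ∧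
      (∀ x, f x = true → 1 / 2 ≤ ∑' T : DTree ι σ, if T.eval x = true then μ T else 0)},
    ⨆ x : ι → σ, expCost μ x

/-- Bounded-error (Monte Carlo) randomized query complexity. -/
noncomputable def Rquery {ι σ : Type} (f : (ι → σ) → Bool) : ℝ≥0∞ :=
  ⨅ μ ∈ {μ : PMF (DTree ι σ) |
      ∀ x, 9 / 10 ≤ ∑' T : DTree ι σ, if T.eval x = f x then μ T else 0},
    ⨆ x : ι → σ, expCost μ x
/-! ### Quantum query algorithms -/

/-- The standard quantum query oracle `O_x |j,p⟩|w⟩ = |j, p + x_j mod S⟩|w⟩`,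
as a matrix. -/
noncomputable def qOracle {V ω : Type} [DecidableEq V] [DecidableEq ω] {S : ℕ}
    (x : V → Fin S) : Matrix (V × Fin S × ω) (V × Fin S × ω) ℂ :=
  fun r c => if r = (c.1, c.2.1 + x c.1, c.2.2) then 1 else 0

/-- A quantum query algorithm on inputs `x : V → Fin S`, making `queries` queries, with
workspace `Fin (W+1)`, alternating the unitaries `U 0, …, U queries` with the oracle,
and measuring with the projector `P` at the end. -/
structure QAlg (V : Type) [Fintype V] [DecidableEq V] (S : ℕ) [NeZero S] where
  queries : ℕ
  W : ℕ
  init : V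
  U : ℕ → Matrix (V × Fin S × Fin (W + 1)) (V × Fin S × Fin (W + 1)) ℂ
  hU : ∀ t, (U t).conjTranspose * U t = 1 ∧ U t * (U t).conjTranspose = 1
  P : Matrix (V × Fin S × Fin (W + 1)) (V × Fin S × Fin (W + 1)) ℂ
  hP : P.conjTranspose = P ∧ P * P = P

namespace QAlg

variable {V : Type} [Fintype V] [DecidableEq V] {S : ℕ} [NeZero S]

/-- The state of the quantum algorithm after `t` steps on input `x`. -/
noncomputable def state (A : QAlg V S) (x : V → Fin S) :
    ℕ → (V × Fin S × Fin (A.W + 1) → ℂ)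
  | 0 => (A.U 0).mulVec fun r => if r = (A.init, 0, 0) then 1 else 0
  | t + 1 => (A.U (t + 1)).mulVec ((qOracle x).mulVec (A.state x t))

/-- The probability that the algorithm accepts input `x`: `‖P |Ψ_x⟩‖²`. -/
noncomputable def acceptProb (A : QAlg V S) (x : V → Fin S) : ℝ :=
  ∑ r : V × Fin S × Fin (A.W + 1), Complex.normSq (A.P.mulVec (A.state x A.queries) r)

end QAlg

/-- Bounded-error quantum query complexity (for functions over a finite input
alphabet `σ`, identified with `Fin (card σ)` via a fixed bijection). -/
noncomputable def Qquery {V σ : Type} [Fintype V] [DecidableEq V] [Fintype σ] [Nonempty σ]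
    (f : (V → σ) → Bool) : ℕ :=
  letI : NeZero (Fintype.card σ) := ⟨Fintype.card_ne_zero⟩
  sInf {t : ℕ | ∃ A : QAlg V (Fintype.card σ), A.queries = t ∧
    ∀ x : V → σ,
      (f x = true → 9 / 10 ≤ A.acceptProb fun j => Fintype.equivFin σ (x j)) ∧
      (f x = false → A.acceptProb (fun j => Fintype.equivFin σ (x j)) ≤ 1 / 10)}

/-- Exact quantum query complexity. -/
noncomputable def QEquery {V σ : Type} [Fintype V] [DecidableEq V] [Fintype σ] [Nonempty σ]
    (f : (V → σ) → Bool) : ℕ :=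
  letI : NeZero (Fintype.card σ) := ⟨Fintype.card_ne_zero⟩
  sInf {t : ℕ | ∃ A : QAlg V (Fintype.card σ), A.queries = t ∧
    ∀ x : V → σ,
      (f x = true → A.acceptProb (fun j => Fintype.equivFin σ (x j)) = 1) ∧
      (f x = false → A.acceptProb (fun j => Fintype.equivFin σ (x j)) = 0)}

/-- Approximate degree of a boolean function. -/
noncomputable def adeg {ι : Type} (F : (ι → Bool) → Bool) : ℕ :=
  sInf {d : ℕ | ∃ p : MvPolynomial ι ℝ, p.totalDegree ≤ d ∧
    ∀ y : ι → Bool, |MvPolynomial.eval (fun i => if y i then (1 : ℝ) else 0) p -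
      (if F y then 1 else 0)| ≤ 1 / 10}
/-! ### The pointer functions of Göös–Pitassi–Watson type -/

/-- A symbol of the input alphabet: a boolean value, a left pointer, a right pointer,
and a back/internal pointer (to a cell or a column, depending on `β`). -/
structure PSym (n m : ℕ) (β : Type) where
  val : Bool
  lp : Option (Fin n × Fin m)
  rp : Option (Fin n × Fin m)
  bp : Option β
deriving DecidableEq

/-- The all-ones symbol `(1,⊥,⊥,⊥)`. -/
def PSym.one (n m : ℕ) (β : Type) : PSym n m β := ⟨true, none, none, none⟩

/-- The symbol `(0,⊥,⊥,⊥)`. -/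
def PSym.zero (n m : ℕ) (β : Type) : PSym n m β := ⟨false, none, none, none⟩

def PSym.equivProd (n m : ℕ) (β : Type) :
    PSym n m β ≃ Bool × Option (Fin n × Fin m) × Option (Fin n × Fin m) × Option β where
  toFun v := (v.val, v.lp, v.rp, v.bp)
  invFun p := ⟨p.1, p.2.1, p.2.2.1, p.2.2.2⟩
  left_inv _ := rfl
  right_inv _ := rfl

instance {n m : ℕ} {β : Type} [Fintype β] : Fintype (PSym n m β) :=
  Fintype.ofEquiv _ (PSym.equivProd n m β).symm

instance {n m : ℕ} {β : Type} : Nonempty (PSym n m β) := ⟨PSym.one n m β⟩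

/-- The sequence of k bits of `j`, most significant first:  the root-to-leaf path
(`false` = left, `true` = right) of the `j`-th leaf in the complete binary tree of depth `k`. -/
def bitsPath (k j : ℕ) : List Bool :=
  ((List.range k).reverse).map fun i => j.testBit i

/-- The root-to-leaf path of the leaf labeled `j` (0-indexed) in the balanced binary tree
with `m` leaves: the complete binary tree if `m` is a power of 2, and otherwise the complete
binary tree on `2 ^ ⌊log₂ m⌋` leaves with a pair of children added to each of the
`m - 2 ^ ⌊log₂ m⌋` leftmost leaves. -/
def treePath (m j : ℕ) : List Bool :=
  if m - 2 ^ Nat.log 2 m = 0 then bitsPath (Nat.log 2 m) j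
  else if j < 2 * (m - 2 ^ Nat.log 2 m) then
    bitsPath (Nat.log 2 m) (j / 2) ++ [j % 2 == 1]
  else bitsPath (Nat.log 2 m) (j - (m - 2 ^ Nat.log 2 m))

/-- Starting at cell `a` and following the left/right pointers of `x` as prescribed by the
list `p` of moves (`false` = left pointer, `true` = right pointer); returns `none` if a
null pointer is encountered. -/
def followPath {n m : ℕ} {β : Type} (x : Fin n × Fin m → PSym n m β)
    (a : Fin n × Fin m) (p : List Bool) : Option (Fin n × Fin m) :=
  p.foldl (fun acc b => acc.bind fun c => if b then (x c).rp else (x c).lp) (some a)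

/-- The conditions for `x` to be a 1-input of `f_{n,m}`, with marked column `b` and special
element `a`: (1) `b` is the unique all-1 column; (2) `a` is the unique cell of column `b`
with `x_a ≠ (1,⊥,⊥,⊥)`; (3) for every column `j ≠ b` the tree path from `a` to the leaf
labeled `j` exists, and ends at a cell `ℓ_j` of column `j` holding a 0; (4) the back pointer
of each `ℓ_j` points to the column `b`. -/
def fCond (n m : ℕ) (x : Fin n × Fin m → PSym n m (Fin m))
    (b : Fin m) (a : Fin n × Fin m) : Prop :=
  (∀ j : Fin m, (∀ i : Fin n, (x (i, j)).val = true) ↔ j = b) ∧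
  a.2 = b ∧
  (∀ i : Fin n, x (i, b) ≠ PSym.one n m (Fin m) ↔ (i, b) = a) ∧
  ∀ j : Fin m, j ≠ b →
    ∃ ℓ : Fin n × Fin m, followPath x a (treePath m j.1) = some ℓ ∧
      ℓ.2 = j ∧ (x ℓ).val = false ∧ (x ℓ).bp = some b

/-- The pointer function `f_{n,m}`, with back pointers to the marked column. -/
noncomputable def fFun (n m : ℕ) (x : Fin n × Fin m → PSym n m (Fin m)) : Bool :=
  if ∃ b a, fCond n m x b a then true else false

/-- The conditions for `x` to be a 1-input of `g_{n,m}`, with marked column `b` and special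
element `a`: (1)–(3) as for `f_{n,m}`, and (4′) the set of columns `j ≠ b` whose highlighted
zero `ℓ_j` has back pointer to `a` has size exactly `m/2`. -/
def gCond (n m : ℕ) (x : Fin n × Fin m → PSym n m (Fin n × Fin m))
    (b : Fin m) (a : Fin n × Fin m) : Prop :=
  (∀ j : Fin m, (∀ i : Fin n, (x (i, j)).val = true) ↔ j = b) ∧
  a.2 = b ∧
  (∀ i : Fin n, x (i, b) ≠ PSym.one n m (Fin n × Fin m) ↔ (i, b) = a) ∧
  (∀ j : Fin m, j ≠ b →
    ∃ ℓ : Fin n × Fin m, followPath x a (treePath m j.1) = some ℓ ∧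
      ℓ.2 = j ∧ (x ℓ).val = false) ∧
  {j : Fin m | j ≠ b ∧ ∃ ℓ : Fin n × Fin m,
      followPath x a (treePath m j.1) = some ℓ ∧ (x ℓ).bp = some a}.ncard = m / 2

/-- The pointer function `g_{n,m}`, where exactly `m/2` of the highlighted zeroes point
back to the special element. -/
noncomputable def gFun (n m : ℕ) (x : Fin n × Fin m → PSym n m (Fin n × Fin m)) : Bool :=
  if ∃ b a, gCond n m x b a then true else false

/-- Column `j` is good in `x` (for `g_{n,m}`): `x` is a 1-input with marked column `b ≠ j`
and special element `a`, and the highlighted zero of column `j` points back to `a`. -/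
def goodColumn (n m : ℕ) (x : Fin n × Fin m → PSym n m (Fin n × Fin m)) (j : Fin m) : Prop :=
  ∃ b a, gCond n m x b a ∧ j ≠ b ∧
    ∃ ℓ : Fin n × Fin m, followPath x a (treePath m j.1) = some ℓ ∧ (x ℓ).bp = some a

/-- The conditions for `x` to be a 1-input of `h_{k,n,m}`, with marked columns `b 0,…,b (k-1)`
and special elements `a 0,…,a (k-1)`: (1) the `b s` are exactly the all-1 columns; (2) `a s` is
the unique cell of column `b s` with `x_{a s} ≠ (1,⊥,⊥,⊥)`; (3) the internal pointers of the
`a s` form a cycle and all the `a s` have equal left pointers and equal right pointers;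
(4) for every non-marked column `j` the tree path from any `a s` to the leaf labeled `j`
exists and ends at a cell `ℓ_j` of column `j` holding a 0. -/
def hCond (k n m : ℕ) (x : Fin n × Fin m → PSym n m (Fin n × Fin m))
    (b : Fin k → Fin m) (a : Fin k → Fin n × Fin m) : Prop :=
  Function.Injective b ∧
  (∀ j : Fin m, (∀ i : Fin n, (x (i, j)).val = true) ↔ ∃ s, b s = j) ∧
  (∀ s, (a s).2 = b s) ∧
  (∀ s, ∀ i : Fin n, x (i, b s) ≠ PSym.one n m (Fin n × Fin m) ↔ (i, b s) = a s) ∧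
  (∀ s : Fin k, (x (a s)).bp = some (a ⟨(s.1 + 1) % k, Nat.mod_lt _ s.pos⟩)) ∧
  (∀ s t : Fin k, (x (a s)).lp = (x (a t)).lp ∧ (x (a s)).rp = (x (a t)).rp) ∧
  ∀ j : Fin m, (∀ s, b s ≠ j) → ∀ s : Fin k,
    ∃ ℓ : Fin n × Fin m, followPath x (a s) (treePath m j.1) = some ℓ ∧
      ℓ.2 = j ∧ (x ℓ).val = false

/-- The pointer function `h_{k,n,m}` with `k` marked columns and no back pointers. -/
noncomputable def hFun (k n m : ℕ) (x : Fin n × Fin m → PSym n m (Fin n × Fin m)) : Bool :=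
  if ∃ b a, hCond k n m x b a then true else false

/-- The hard input `x^ℓ`: cell `(i,j)` holds `(0,⊥,⊥,⊥)` if `i = ℓ j` and `(1,⊥,⊥,⊥)`
otherwise. -/
def xhard (n m : ℕ) (β : Type) (ℓ : Fin m → Fin n) : Fin n × Fin m → PSym n m β :=
  fun c => if c.1 = ℓ c.2 then PSym.zero n m β else PSym.one n m β

/-- The set of (distinct) cells queried among the first `t` queries of `T` on input `x`. -/
def queriedUpTo {ι σ : Type} [DecidableEq ι] (T : DTree ι σ) (x : ι → σ) (t : ℕ) :
    Finset ι :=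
  ((T.queryList x).take t).toFinset
/-! ### The progress measure for the hard distribution `x^ℓ` -/

/-- Column `j` is compromised (for the input `x^ℓ`), given the set `Q` of queried cells:
the zero cell `(ℓ j, j)` has been queried, or more than `n/2` cells of column `j` have been
queried. -/
def compromisedCol (n m : ℕ) (ℓ : Fin m → Fin n) (Q : Finset (Fin n × Fin m))
    (j : Fin m) : Prop :=
  (ℓ j, j) ∈ Q ∨ n < 2 * (Q.filter fun c => c.2 = j).card

/-- The progress measure `I_t = A_t + (2/n)·B_t` of the decision tree `T` on the input `x^ℓ`
after `t` queries, where `A_t` is the number of compromised columns and `B_t` is the number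
of queried cells lying outside compromised columns. -/
noncomputable def Imeasure (n m : ℕ)
    (T : DTree (Fin n × Fin m) (PSym n m (Fin n × Fin m))) (ℓ : Fin m → Fin n) (t : ℕ) : ℝ :=
  ({j : Fin m |
      compromisedCol n m ℓ (queriedUpTo T (xhard n m (Fin n × Fin m) ℓ) t) j}.ncard : ℝ) +
    (2 / n) * ({c : Fin n × Fin m | c ∈ queriedUpTo T (xhard n m (Fin n × Fin m) ℓ) t ∧
      ¬ compromisedCol n m ℓ (queriedUpTo T (xhard n m (Fin n × Fin m) ℓ) t) c.2}.ncard : ℝ)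
/-! ### The balanced binary tree, via root-to-node paths -/

/-- The node set of the balanced binary tree with `m` leaves: each node is identified with
the left/right path from the root to it, so the nodes are exactly the prefixes of the
root-to-leaf paths. -/
def treeNodes (m : ℕ) : Finset (List Bool) :=
  (Finset.range m).biUnion fun j => (treePath m j).inits.toFinset

/-- The leaves of the balanced binary tree with `m` leaves. -/
def leafNodes (m : ℕ) : Finset (List Bool) :=
  (Finset.range m).image fun j => treePath m j

/-- The internal nodes of the balanced binary tree with `m` leaves. -/
def internalNodes (m : ℕ) : Finset (List Bool) :=
  treeNodes m \ leafNodes m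

/-- The subtree rooted at a node `u`: all nodes of which `u` is a prefix. -/
def subtreeOf (m : ℕ) (u : List Bool) : Finset (List Bool) :=
  (treeNodes m).filter fun w => u <+: w

/-! ### The hard distribution for `h_{1,n,m}` -/

/-- A parameter quadruple `(v, π, ℓᴸ, ℓᴺ)` for the hard distribution: a bit `v`, a map `π`
from internal tree nodes to columns, and row maps `ℓᴸ, ℓᴺ` for leaves resp. internal nodes. -/
abbrev HardQ (n m : ℕ) : Type :=
  Bool × ({u : List Bool // u ∈ internalNodes m} → Fin m) × (Fin m → Fin n) × (Fin m → Fin n)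

/-- The valid parameter quadruples: `π` injective and `ℓᴸ j ≠ ℓᴺ j` for all `j`. -/
noncomputable def hardSet (n m : ℕ) : Finset (HardQ n m) :=
  Finset.univ.filter fun q => Function.Injective q.2.1 ∧ ∀ j, q.2.2.1 j ≠ q.2.2.2 j

/-- The column of the root of the tree (`none` if the tree has no internal node). -/
noncomputable def rootCol (n m : ℕ) (q : HardQ n m) : Option (Fin m) :=
  if h : ([] : List Bool) ∈ internalNodes m then some (q.2.1 ⟨[], h⟩) else none

/-- The cell where a child node `w` of an internal node is placed: internal nodes go to
cell `(ℓᴺ (π w), π w)`, the leaf labeled `j` goes to cell `(ℓᴸ j, j)`, and the removed leaf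
(the one labeled by the root's column) yields a null pointer. -/
noncomputable def childCell (n m : ℕ) (q : HardQ n m) (w : List Bool) :
    Option (Fin n × Fin m) :=
  if h : w ∈ internalNodes m then some (q.2.2.2 (q.2.1 ⟨w, h⟩), q.2.1 ⟨w, h⟩)
  else if h2 : ∃ j : Fin m, w = treePath m j.1 ∧ some j ≠ rootCol n m q then
    some (q.2.2.1 (Classical.choose h2), Classical.choose h2)
  else none

/-- The input of the hard distribution determined by the parameter quadruple `q`:
the internal node `u` of the tree is placed at cell `(ℓᴺ (π u), π u)` with left and right
pointers to the cells of its children, value `v` and a self-loop internal pointer if `u` is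
the root, and value 0 otherwise; for `j ≠ π(root)`, the leaf labeled `j` is placed at cell
`(ℓᴸ j, j)` with value 0 and null pointers; all the remaining cells hold `(1,⊥,⊥,⊥)`. -/
noncomputable def hardInput (n m : ℕ) (q : HardQ n m) :
    Fin n × Fin m → PSym n m (Fin n × Fin m) :=
  fun c =>
    if h : ∃ u : {u : List Bool // u ∈ internalNodes m}, q.2.1 u = c.2 ∧ q.2.2.2 c.2 = c.1 then
      { val := if (Classical.choose h).1 = [] then q.1 else false
        lp := childCell n m q ((Classical.choose h).1 ++ [false])
        rp := childCell n m q ((Classical.choose h).1 ++ [true])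
        bp := if (Classical.choose h).1 = [] then some c else none }
    else if some c.2 ≠ rootCol n m q ∧ c.1 = q.2.2.1 c.2 then PSym.zero n m (Fin n × Fin m)
    else PSym.one n m (Fin n × Fin m)

/-- Column `j` directly satisfies (i) or (ii): one of the cells `(ℓᴸ j, j)`, `(ℓᴺ j, j)` has
been queried, or more than half of the cells of column `j` have been queried. -/
def colBad (n m : ℕ) (q : HardQ n m) (Q : Finset (Fin n × Fin m)) (j : Fin m) : Prop :=
  (q.2.2.1 j, j) ∈ Q ∨ (q.2.2.2 j, j) ∈ Q ∨ n < 2 * (Q.filter fun c => c.2 = j).card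

/-- Column `j` is compromised: it satisfies (i) or (ii), or some ancestor `u` of `π⁻¹(j)`
in the tree is such that column `π u` satisfies (i) or (ii). -/
def compromisedCol19 (n m : ℕ) (q : HardQ n m) (Q : Finset (Fin n × Fin m))
    (j : Fin m) : Prop :=
  colBad n m q Q j ∨
  ∃ w u : {u : List Bool // u ∈ internalNodes m}, q.2.1 w = j ∧
    u.1 <+: w.1 ∧ u.1 ≠ w.1 ∧ colBad n m q Q (q.2.1 u)

/-- The progress measure `I_t = min{A_t + (4·C0·log₂ m / n)·B_t, m/2}` of the decision tree
`D` on the hard-distribution input given by `q` after `t` queries, where `A_t` is the number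
of compromised columns and `B_t` the number of queried cells outside compromised columns. -/
noncomputable def Imeasure19 (n m : ℕ) (C0 : ℝ)
    (D : DTree (Fin n × Fin m) (PSym n m (Fin n × Fin m))) (q : HardQ n m) (t : ℕ) : ℝ :=
  min
    (({j : Fin m | compromisedCol19 n m q (queriedUpTo D (hardInput n m q) t) j}.ncard : ℝ) +
      (4 * C0 * Real.logb 2 m / n) *
        ({c : Fin n × Fin m | c ∈ queriedUpTo D (hardInput n m q) t ∧
          ¬ compromisedCol19 n m q (queriedUpTo D (hardInput n m q) t) c.2}.ncard : ℝ))
    (m / 2)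

/-! Each node of the tree is counted in the subtrees of its ancestors only, and a node has at
most `⌊log₂ m⌋ + 2` ancestors (itself included), so the subtree sizes add up to at most
`|V| (⌊log₂ m⌋ + 2) ≤ 4 |S| (⌊log₂ m⌋ + 2)`. With `k = ⌊log₂ m⌋` and `r = m - 2 ^ k`, the tree
consists of the complete levels `0, …, k` and `2 r` nodes at depth `k + 1`, whence
`|V| = (2 ^ (k + 1) - 1) + 2 r = 2 m - 1`. -/

lemma bitsPath_length (k j : ℕ) : (bitsPath k j).length = k := by
  simp [bitsPath]

lemma bitsPath_succ (k j : ℕ) : bitsPath (k + 1) j = j.testBit k :: bitsPath k j := by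
  simp [bitsPath, List.range_succ]

lemma bitsPath_succ_eq_append (k j : ℕ) :
    bitsPath (k + 1) j = bitsPath k (j / 2) ++ [j.testBit 0] := by
  induction k generalizing j with
  | zero => simp [bitsPath]
  | succ k ih => rw [bitsPath_succ, ih, bitsPath_succ, Nat.testBit_div_two]; rfl

lemma bitsPath_take (j : ℕ) {k l : ℕ} (hl : l ≤ k) :
    (bitsPath k j).take l = bitsPath l (j / 2 ^ (k - l)) := by
  obtain ⟨d, rfl⟩ := Nat.exists_eq_add_of_le hl
  induction d generalizing j with
  | zero => simp [List.take_of_length_le, bitsPath_length]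
  | succ d ih =>
    rw [← add_assoc, bitsPath_succ_eq_append,
      List.take_append_of_le_length (by simp [bitsPath_length]), ih _ (by omega),
      Nat.div_div_eq_div_mul, Nat.add_sub_cancel_left, show l + d + 1 - l = d + 1 by omega,
      pow_succ']

lemma bitsPath_inj {k j j' : ℕ} (hj : j < 2 ^ k) (hj' : j' < 2 ^ k)
    (h : bitsPath k j = bitsPath k j') : j = j' := by
  refine Nat.eq_of_testBit_eq fun i => ?_
  by_cases hik : i < k
  · simpa using List.map_inj_left.mp h i (by simp [hik])
  · have hpow : 2 ^ k ≤ 2 ^ i := Nat.pow_le_pow_right two_pos (by omega)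
    rw [Nat.testBit_lt_two_pow (hj.trans_le hpow), Nat.testBit_lt_two_pow (hj'.trans_le hpow)]

lemma div_two_pow_sub_lt {k l j : ℕ} (hl : l ≤ k) (hj : j < 2 ^ k) :
    j / 2 ^ (k - l) < 2 ^ l := by
  rwa [Nat.div_lt_iff_lt_mul (Nat.two_pow_pos _), ← pow_add, Nat.add_sub_cancel' hl]

lemma eq_bitsPath_of_prefix {k j : ℕ} {u : List Bool} (h : u <+: bitsPath k j) :
    u = bitsPath u.length (j / 2 ^ (k - u.length)) := by
  have hl : u.length ≤ k := by simpa [bitsPath_length] using h.length_le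
  rw [← bitsPath_take j hl, ← List.prefix_iff_eq_take.mp h]

lemma treePath_eq (m j : ℕ) : treePath m j =
    if j < 2 * (m - 2 ^ Nat.log 2 m) then bitsPath (Nat.log 2 m + 1) j
    else bitsPath (Nat.log 2 m) (j - (m - 2 ^ Nat.log 2 m)) := by
  unfold treePath
  split_ifs with hr hj hj
  · omega
  · simp [hr]
  · rw [bitsPath_succ_eq_append, Nat.testBit_zero, beq_eq_decide]
  · rfl

lemma mem_treeNodes {m : ℕ} {u : List Bool} :
    u ∈ treeNodes m ↔ ∃ j < m, u <+: treePath m j := by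
  simp [treeNodes, List.mem_inits]

lemma mem_treeNodes_of_prefix {m : ℕ} {u w : List Bool} (h : u <+: w) (hw : w ∈ treeNodes m) :
    u ∈ treeNodes m := by
  obtain ⟨j, hj, hw⟩ := mem_treeNodes.mp hw
  exact mem_treeNodes.mpr ⟨j, hj, h.trans hw⟩

lemma length_le_of_mem_treeNodes {m : ℕ} {u : List Bool} (hu : u ∈ treeNodes m) :
    u.length ≤ Nat.log 2 m + 1 := by
  obtain ⟨j, -, hpre⟩ := mem_treeNodes.mp hu
  refine hpre.length_le.trans ?_
  rw [treePath_eq]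
  split_ifs <;> simp [bitsPath_length]

lemma bitsPath_mem_treeNodes {m j : ℕ} (hm : 0 < m) (hj : j < 2 ^ Nat.log 2 m) :
    bitsPath (Nat.log 2 m) j ∈ treeNodes m := by
  have hk₁ : 2 ^ Nat.log 2 m ≤ m := Nat.pow_log_le_self 2 hm.ne'
  have hk : m < 2 * 2 ^ Nat.log 2 m := by
    rw [← pow_succ']; exact Nat.lt_pow_succ_log_self one_lt_two m
  by_cases hjr : j < m - 2 ^ Nat.log 2 m
  · refine mem_treeNodes.mpr ⟨2 * j, by omega, ?_⟩
    rw [treePath_eq, if_pos (by omega), bitsPath_succ_eq_append, Nat.mul_div_cancel_left _ two_pos]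
    exact List.prefix_append _ _
  · refine mem_treeNodes.mpr ⟨j + (m - 2 ^ Nat.log 2 m), by omega, ?_⟩
    rw [treePath_eq, if_neg (by omega), Nat.add_sub_cancel]

def levelWidth (m l : ℕ) : ℕ :=
  if l ≤ Nat.log 2 m then 2 ^ l
  else if l = Nat.log 2 m + 1 then 2 * (m - 2 ^ Nat.log 2 m) else 0

def treeLevel (m l : ℕ) : Finset (List Bool) :=
  (Finset.range (levelWidth m l)).image (bitsPath l)

lemma levelWidth_le_two_pow (m l : ℕ) : levelWidth m l ≤ 2 ^ l := by
  have hk : m < 2 ^ (Nat.log 2 m + 1) := Nat.lt_pow_succ_log_self one_lt_two m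
  unfold levelWidth
  split_ifs with h₁ h₂
  · rfl
  · subst h₂; rw [pow_succ] at hk ⊢; omega
  · exact Nat.zero_le _

lemma length_of_mem_treeLevel {m l : ℕ} {u : List Bool} (hu : u ∈ treeLevel m l) :
    u.length = l := by
  obtain ⟨i, -, rfl⟩ := Finset.mem_image.mp hu
  exact bitsPath_length l i

lemma card_treeLevel (m l : ℕ) : (treeLevel m l).card = levelWidth m l := by
  rw [treeLevel, Finset.card_image_of_injOn, Finset.card_range]
  intro i hi i' hi' h
  have hw := levelWidth_le_two_pow m l
  simp only [Finset.coe_range, Set.mem_Iio] at hi hi'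
  exact bitsPath_inj (hi.trans_le hw) (hi'.trans_le hw) h

lemma prefix_mem_treeLevel {m l j : ℕ} {u : List Bool} (hj : j < 2 ^ l) (h : u <+: bitsPath l j)
    (hu : u.length ≤ Nat.log 2 m) : u ∈ treeLevel m u.length := by
  have hl : u.length ≤ l := by simpa [bitsPath_length] using h.length_le
  refine Finset.mem_image.mpr ⟨j / 2 ^ (l - u.length), ?_, (eq_bitsPath_of_prefix h).symm⟩
  rw [Finset.mem_range, levelWidth, if_pos hu]
  exact div_two_pow_sub_lt hl hj

lemma treeLevel_subset_treeNodes {m : ℕ} (hm : 0 < m) (l : ℕ) : treeLevel m l ⊆ treeNodes m := by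
  intro u hu
  obtain ⟨i, hi, rfl⟩ := Finset.mem_image.mp hu
  rw [Finset.mem_range] at hi
  unfold levelWidth at hi
  split_ifs at hi with hlk hlk'
  · refine mem_treeNodes_of_prefix ?_ (bitsPath_mem_treeNodes (j := i * 2 ^ (Nat.log 2 m - l))
      hm ?_)
    · have := bitsPath_take (i * 2 ^ (Nat.log 2 m - l)) hlk
      rw [Nat.mul_div_cancel _ (Nat.two_pow_pos _)] at this
      exact this ▸ List.take_prefix _ _
    · calc i * 2 ^ (Nat.log 2 m - l) < 2 ^ l * 2 ^ (Nat.log 2 m - l) :=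
            Nat.mul_lt_mul_of_pos_right hi (Nat.two_pow_pos _)
        _ = 2 ^ Nat.log 2 m := by rw [← pow_add, Nat.add_sub_cancel' hlk]
  · subst hlk'
    have hk : m < 2 * 2 ^ Nat.log 2 m := by
      rw [← pow_succ']; exact Nat.lt_pow_succ_log_self one_lt_two m
    refine mem_treeNodes.mpr ⟨i, by omega, ?_⟩
    rw [treePath_eq, if_pos hi]
  · omega

lemma treeNodes_eq_biUnion_treeLevel {m : ℕ} (hm : 0 < m) :
    treeNodes m = (Finset.range (Nat.log 2 m + 2)).biUnion (treeLevel m) := by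
  have hk : m < 2 * 2 ^ Nat.log 2 m := by
    rw [← pow_succ']; exact Nat.lt_pow_succ_log_self one_lt_two m
  ext u
  rw [Finset.mem_biUnion]
  constructor
  · intro hu
    obtain ⟨j, hj, hpre⟩ := mem_treeNodes.mp hu
    have hlen := length_le_of_mem_treeNodes hu
    rw [treePath_eq] at hpre
    split_ifs at hpre with hjr
    · by_cases hl : u.length ≤ Nat.log 2 m
      · exact ⟨u.length, Finset.mem_range.mpr (by omega),
          prefix_mem_treeLevel (by rw [pow_succ]; omega) hpre hl⟩
      · refine ⟨Nat.log 2 m + 1, Finset.mem_range.mpr (by omega), Finset.mem_image.mpr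
          ⟨j, ?_, (hpre.eq_of_length (by rw [bitsPath_length]; omega)).symm⟩⟩
        rw [Finset.mem_range, levelWidth, if_neg (by omega), if_pos rfl]
        exact hjr
    · have hl : u.length ≤ Nat.log 2 m := by simpa [bitsPath_length] using hpre.length_le
      exact ⟨u.length, Finset.mem_range.mpr (by omega), prefix_mem_treeLevel (by omega) hpre hl⟩
  · rintro ⟨l, -, hu⟩
    exact treeLevel_subset_treeNodes hm l hu

lemma card_treeNodes {m : ℕ} (hm : 0 < m) : (treeNodes m).card = 2 * m - 1 := by
  have hk₁ : 2 ^ Nat.log 2 m ≤ m := Nat.pow_log_le_self 2 hm.ne'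
  have hk₂ : m < 2 * 2 ^ Nat.log 2 m := by
    rw [← pow_succ']; exact Nat.lt_pow_succ_log_self one_lt_two m
  have hdisj : Set.PairwiseDisjoint ↑(Finset.range (Nat.log 2 m + 2)) (treeLevel m) :=
    fun l _ l' _ hne => Finset.disjoint_left.mpr fun _ hu hu' =>
      hne ((length_of_mem_treeLevel hu).symm.trans (length_of_mem_treeLevel hu'))
  have hcomplete : ∑ l ∈ Finset.range (Nat.log 2 m + 1), levelWidth m l =
      2 * 2 ^ Nat.log 2 m - 1 := by
    rw [Finset.sum_congr rfl fun l hl => by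
        rw [levelWidth, if_pos (Nat.lt_succ_iff.mp (Finset.mem_range.mp hl))],
      Nat.geomSum_eq le_rfl, pow_succ', Nat.div_one]
  rw [treeNodes_eq_biUnion_treeLevel hm, Finset.card_biUnion hdisj]
  simp only [card_treeLevel]
  rw [Finset.sum_range_succ, hcomplete, levelWidth, if_neg (by omega), if_pos rfl]
  omega

lemma sum_card_filter_prefix_le {α : Type*} [DecidableEq α] (V : Finset (List α)) :
    ∑ u ∈ V, (V.filter (u <+: ·)).card ≤ ∑ w ∈ V, (w.length + 1) := by
  change ∑ u ∈ V, (Finset.bipartiteAbove (· <+: ·) V u).card ≤ _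
  rw [Finset.sum_card_bipartiteAbove_eq_sum_card_bipartiteBelow]
  refine Finset.sum_le_sum fun w _ => ?_
  calc (Finset.bipartiteBelow (· <+: ·) V w).card ≤ w.inits.toFinset.card :=
        Finset.card_le_card fun u hu => by
          simpa [List.mem_inits] using (Finset.mem_filter.mp hu).2
    _ ≤ w.inits.length := List.toFinset_card_le _
    _ = w.length + 1 := List.length_inits w

lemma sum_card_subtreeOf_le (m : ℕ) :
    ∑ u ∈ treeNodes m, (subtreeOf m u).card ≤ (treeNodes m).card * (Nat.log 2 m + 2) :=
  calc ∑ u ∈ treeNodes m, (subtreeOf m u).card ≤ ∑ w ∈ treeNodes m, (w.length + 1) :=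
        sum_card_filter_prefix_le _
    _ ≤ ∑ _w ∈ treeNodes m, (Nat.log 2 m + 2) :=
        Finset.sum_le_sum fun w hw => by have := length_le_of_mem_treeNodes hw; omega
    _ = (treeNodes m).card * (Nat.log 2 m + 2) := by rw [Finset.sum_const, smul_eq_mul]

/-- The balanced binary tree with `m` leaves has `2m - 1` nodes, and for
every subset `S` of at least a quarter of its nodes, the average size of the subtree rooted
at an element of `S` is at most `C0·log₂ m`. -/
theorem statement18 :
    ∃ C0 : ℝ, 0 < C0 ∧ ∀ m : ℕ, 2 ≤ m →
      (treeNodes m).card = 2 * m - 1 ∧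
      ∀ S : Finset (List Bool), S ⊆ treeNodes m → (treeNodes m).card ≤ 4 * S.card →
        (∑ u ∈ S, ((subtreeOf m u).card : ℝ)) ≤ C0 * Real.logb 2 m * S.card := by
  refine ⟨12, by norm_num, fun m hm => ⟨card_treeNodes (by omega), fun S hS hcard => ?_⟩⟩
  have hsum : ∑ u ∈ S, (subtreeOf m u).card ≤ 4 * S.card * (Nat.log 2 m + 2) :=
    calc ∑ u ∈ S, (subtreeOf m u).card ≤ ∑ u ∈ treeNodes m, (subtreeOf m u).card :=
          Finset.sum_le_sum_of_subset hS
      _ ≤ (treeNodes m).card * (Nat.log 2 m + 2) := sum_card_subtreeOf_le m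
      _ ≤ 4 * S.card * (Nat.log 2 m + 2) := Nat.mul_le_mul_right _ hcard
  have hdepth : (Nat.log 2 m : ℝ) + 2 ≤ 3 * Real.logb 2 m := by
    have hlog : (Nat.log 2 m : ℝ) ≤ Real.logb 2 m := Real.natLog_le_logb m 2
    have hlog_pos : (1 : ℝ) ≤ Nat.log 2 m := by exact_mod_cast Nat.log_pos one_lt_two hm
    linarith
  calc (∑ u ∈ S, ((subtreeOf m u).card : ℝ)) ≤ 4 * S.card * (Nat.log 2 m + 2) := by
        exact_mod_cast hsum
    _ ≤ 4 * S.card * (3 * Real.logb 2 m) := by gcongr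
    _ = 12 * Real.logb 2 m * S.card := by ring
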